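/- Let β : ℝ → ℝ be a monotone nondecreasing continuous function with β(0) = 0, let σ ∈ (0,1), p ≥ 2, and let u ∈ X_{σ0} solve 𝔄_σ u + β(u) = f in X_{σ0}' with f ∈ L^p(Ω) and β(u) ∈ L²(Ω). Then β(u) ∈ L^p(Ω) and ‖β(u)‖_{L^p(Ω)} ≤ ‖f‖_{L^p(Ω)}. -/

import Mathlib

/-!
Test the equation with `δ_ε(u)`, where `δ_ε = g ∘ J_ε` is the Yosida approximation of
`g(s) = |β(s)|^{p-2} β(s)` and `J_ε = (1 + ε g)⁻¹`. Since `δ_ε` is monotone, Lipschitz and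
vanishes at `0`, `δ_ε(u)` is an admissible test function and the nonlocal term is nonnegative,
so `∫ β(u) δ_ε(u) ≤ ∫ f δ_ε(u)`. As `J_ε s` lies between `0` and `s`,
`|β(J_ε u)|^p ≤ β(u) δ_ε(u)` and `|δ_ε(u)| = |β(J_ε u)|^{p-1}`, so Hölder's inequality gives
`‖β(J_ε u)‖_p ≤ ‖f‖_p`. Finally `J_ε u → u` as `ε → 0`, and Fatou's lemma concludes.
All products are integrable because a function of finite Gagliardo energy vanishing outside
a bounded set is in `L²`.
-/

open MeasureTheory Set Filter Topology
open scoped ENNReal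

noncomputable def signedPow (p b : ℝ) : ℝ := |b| ^ (p - 2) * b

section SignedPow

variable {p : ℝ}

@[simp] lemma signedPow_zero (p : ℝ) : signedPow p 0 = 0 := by simp [signedPow]

lemma continuous_signedPow (hp : 2 ≤ p) : Continuous (signedPow p) :=
  (continuous_abs.rpow_const fun _ => Or.inr (by linarith)).mul continuous_id

lemma monotone_signedPow (hp : 2 ≤ p) : Monotone (signedPow p) := by
  refine monotone_of_odd_of_monotoneOn_nonneg (fun b => by simp [signedPow]) ?_
  intro a ha b hb hab
  rw [mem_Ici] at ha hb
  exact mul_le_mul (Real.rpow_le_rpow (abs_nonneg a) (abs_le_abs_of_nonneg ha hab)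
    (by linarith)) hab ha (Real.rpow_nonneg (abs_nonneg b) _)

lemma abs_signedPow (hp : 2 ≤ p) (b : ℝ) : |signedPow p b| = |b| ^ (p - 1) := by
  rw [signedPow, abs_mul, abs_of_nonneg (Real.rpow_nonneg (abs_nonneg b) _),
    show p - 1 = (p - 2) + 1 by ring,
    Real.rpow_add_of_nonneg (abs_nonneg b) (by linarith) zero_le_one, Real.rpow_one]

lemma mul_signedPow_self (hp : 2 ≤ p) (b : ℝ) : b * signedPow p b = |b| ^ p := by
  have hsplit : |b| ^ p = |b| ^ (p - 2) * |b| ^ (2 : ℝ) := by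
    rw [← Real.rpow_add_of_nonneg (abs_nonneg b) (by linarith) zero_le_two, sub_add_cancel]
  rw [hsplit, Real.rpow_two, sq_abs, signedPow]
  ring

lemma abs_rpow_le_mul_signedPow (hp : 2 ≤ p) {a b : ℝ} (hab : a ∈ uIcc 0 b) :
    |a| ^ p ≤ b * signedPow p a := by
  rw [← mul_signedPow_self hp, ← sub_nonneg, ← sub_mul]
  rcases mem_uIcc.1 hab with ⟨ha, hab⟩ | ⟨hba, ha⟩
  · exact mul_nonneg (sub_nonneg.2 hab) (signedPow_zero p ▸ monotone_signedPow hp ha)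
  · exact mul_nonneg_of_nonpos_of_nonpos (sub_nonpos.2 hba)
      (signedPow_zero p ▸ monotone_signedPow hp ha)

end SignedPow

lemma abs_le_abs_of_mem_uIcc_zero {a b : ℝ} (h : a ∈ uIcc 0 b) : |a| ≤ |b| := by
  rcases mem_uIcc.1 h with ⟨h0, hb⟩ | ⟨hb, h0⟩
  · exact abs_le_abs_of_nonneg h0 hb
  · exact abs_le_abs_of_nonpos h0 hb

/-- The resolvent `(1 + ε g)⁻¹ s`, well defined for continuous monotone `g` with `g 0 = 0`. -/
noncomputable def yosidaResolvent (g : ℝ → ℝ) (ε s : ℝ) : ℝ :=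
  Classical.epsilon fun t => t ∈ uIcc 0 s ∧ t + ε * g t = s

noncomputable def yosidaApprox (g : ℝ → ℝ) (ε s : ℝ) : ℝ := g (yosidaResolvent g ε s)

section Resolvent

variable {g : ℝ → ℝ} {ε : ℝ}

lemma exists_mem_uIcc_add_mul_eq (hgc : Continuous g) (hgm : Monotone g) (hg0 : g 0 = 0)
    (hε : 0 ≤ ε) (s : ℝ) : ∃ t ∈ uIcc 0 s, t + ε * g t = s := by
  have hs : s ∈ uIcc (0 + ε * g 0) (s + ε * g s) := by
    rw [hg0, mul_zero, add_zero, mem_uIcc]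
    rcases le_total 0 s with h | h
    · exact Or.inl ⟨h, le_add_of_nonneg_right (mul_nonneg hε (hg0 ▸ hgm h))⟩
    · exact Or.inr
        ⟨add_le_of_nonpos_right (mul_nonpos_of_nonneg_of_nonpos hε (hg0 ▸ hgm h)), h⟩
  exact intermediate_value_uIcc (continuous_id.add (continuous_const.mul hgc)).continuousOn hs

lemma yosidaResolvent_spec (hgc : Continuous g) (hgm : Monotone g) (hg0 : g 0 = 0)
    (hε : 0 ≤ ε) (s : ℝ) :
    yosidaResolvent g ε s ∈ uIcc 0 s ∧
      yosidaResolvent g ε s + ε * g (yosidaResolvent g ε s) = s :=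
  Classical.epsilon_spec (exists_mem_uIcc_add_mul_eq hgc hgm hg0 hε s)

lemma monotone_yosidaResolvent (hgc : Continuous g) (hgm : Monotone g) (hg0 : g 0 = 0)
    (hε : 0 ≤ ε) : Monotone (yosidaResolvent g ε) := by
  intro s t hst
  by_contra! hlt
  have hs := (yosidaResolvent_spec hgc hgm hg0 hε s).2
  have ht := (yosidaResolvent_spec hgc hgm hg0 hε t).2
  have := mul_le_mul_of_nonneg_left (hgm hlt.le) hε
  linarith

lemma yosidaApprox_zero (hgc : Continuous g) (hgm : Monotone g) (hg0 : g 0 = 0)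
    (hε : 0 ≤ ε) : yosidaApprox g ε 0 = 0 := by
  have h := (yosidaResolvent_spec hgc hgm hg0 hε 0).1
  rw [uIcc_self, mem_singleton_iff] at h
  rw [yosidaApprox, h, hg0]

lemma monotone_yosidaApprox (hgc : Continuous g) (hgm : Monotone g) (hg0 : g 0 = 0)
    (hε : 0 ≤ ε) : Monotone (yosidaApprox g ε) :=
  hgm.comp (monotone_yosidaResolvent hgc hgm hg0 hε)

/-- Both `J` and `id - J = ε • (g ∘ J)` are monotone, so increments of `s` split into two
nonnegative parts. -/
lemma lipschitzWith_yosidaApprox (hgc : Continuous g) (hgm : Monotone g) (hg0 : g 0 = 0)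
    (hε : 0 < ε) : LipschitzWith (Real.toNNReal ε⁻¹) (yosidaApprox g ε) := by
  refine LipschitzWith.of_dist_le' fun s t => ?_
  wlog hts : t ≤ s generalizing s t
  · rw [dist_comm, dist_comm s]; exact this t s (le_of_not_ge hts)
  have hJ := monotone_yosidaResolvent hgc hgm hg0 hε.le hts
  have hδ := monotone_yosidaApprox hgc hgm hg0 hε.le hts
  have hs := (yosidaResolvent_spec hgc hgm hg0 hε.le s).2
  have ht := (yosidaResolvent_spec hgc hgm hg0 hε.le t).2
  rw [Real.dist_eq, Real.dist_eq, abs_of_nonneg (sub_nonneg.2 hδ),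
    abs_of_nonneg (sub_nonneg.2 hts), ← div_eq_inv_mul, le_div_iff₀' hε]
  unfold yosidaApprox at hδ ⊢
  linarith

lemma abs_sub_yosidaResolvent_le (hgc : Continuous g) (hgm : Monotone g) (hg0 : g 0 = 0)
    (hε : 0 ≤ ε) (s : ℝ) : |s - yosidaResolvent g ε s| ≤ ε * |g s| := by
  obtain ⟨hmem, heq⟩ := yosidaResolvent_spec hgc hgm hg0 hε s
  have hg := hgm.mapsTo_uIcc hmem
  rw [hg0] at hg
  calc |s - yosidaResolvent g ε s| = ε * |g (yosidaResolvent g ε s)| := by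
        rw [show s - yosidaResolvent g ε s = ε * g (yosidaResolvent g ε s) by linarith,
          abs_mul, abs_of_nonneg hε]
    _ ≤ ε * |g s| := mul_le_mul_of_nonneg_left (abs_le_abs_of_mem_uIcc_zero hg) hε

lemma tendsto_yosidaResolvent (hgc : Continuous g) (hgm : Monotone g) (hg0 : g 0 = 0)
    (s : ℝ) : Tendsto (fun ε => yosidaResolvent g ε s) (𝓝[≥] 0) (𝓝 s) := by
  rw [tendsto_iff_norm_sub_tendsto_zero]
  have hlim : Tendsto (fun ε : ℝ => ε * |g s|) (𝓝[≥] 0) (𝓝 0) := by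
    simpa using (tendsto_nhdsWithin_of_tendsto_nhds (tendsto_id (x := 𝓝 (0 : ℝ)))).mul_const
      |g s|
  refine squeeze_zero' (Eventually.of_forall fun _ => norm_nonneg _) ?_ hlim
  filter_upwards [self_mem_nhdsWithin] with ε hε
  rw [norm_sub_rev]
  exact abs_sub_yosidaResolvent_le hgc hgm hg0 hε s

end Resolvent

section Gagliardo

variable {E : Type*} [NormedAddCommGroup E] [MeasurableSpace E]

noncomputable def gagliardoEnergy (μ : Measure E) (s : ℝ) (u : E → ℝ) : ℝ≥0∞ :=
  ∫⁻ x, ∫⁻ y, ENNReal.ofReal (|u x - u y| ^ 2 / ‖x - y‖ ^ s) ∂μ ∂μ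

lemma gagliardoEnergy_comp_le {μ : Measure E} {s : ℝ} {u : E → ℝ} {δ : ℝ → ℝ} {K : NNReal}
    (hδ : LipschitzWith K δ) :
    gagliardoEnergy μ s (δ ∘ u) ≤ ENNReal.ofReal (K ^ 2) * gagliardoEnergy μ s u := by
  rw [gagliardoEnergy, gagliardoEnergy, ← lintegral_const_mul' _ _ ENNReal.ofReal_ne_top]
  refine lintegral_mono fun x => ?_
  rw [← lintegral_const_mul' _ _ ENNReal.ofReal_ne_top]
  refine lintegral_mono fun y => ?_
  rw [← ENNReal.ofReal_mul (by positivity), ← mul_div_assoc]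
  refine ENNReal.ofReal_le_ofReal (div_le_div_of_nonneg_right ?_ (by positivity))
  have h := hδ.dist_le_mul (u x) (u y)
  rw [Real.dist_eq, Real.dist_eq] at h
  calc |δ (u x) - δ (u y)| ^ 2 ≤ (K * |u x - u y|) ^ 2 := pow_le_pow_left₀ (abs_nonneg _) h 2
    _ = K ^ 2 * |u x - u y| ^ 2 := by ring

/-- Compare `u x` for `x ∈ Ω` with the zero values of `u` on a shell of positive measure
outside `Ω`. -/
lemma memLp_two_restrict_of_gagliardoEnergy_lt_top [NormedSpace ℝ E] [Nontrivial E]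
    [ProperSpace E] [BorelSpace E] {μ : Measure E} [IsFiniteMeasureOnCompacts μ]
    [μ.IsOpenPosMeasure] {Ω : Set E} (hΩ : Bornology.IsBounded Ω) {s : ℝ} (hs : 0 ≤ s)
    {u : E → ℝ} (hum : Measurable u) (hu0 : ∀ᵐ x ∂μ, x ∉ Ω → u x = 0)
    (hu : gagliardoEnergy μ s u < ⊤) : MemLp u 2 (μ.restrict Ω) := by
  obtain ⟨R, hR, hΩR⟩ := hΩ.subset_closedBall_lt 0 0
  set A := Metric.ball (0 : E) (3 * R) \ Metric.closedBall 0 R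
  have hA : 0 < μ A := by
    obtain ⟨z, hz⟩ := exists_norm_eq E (by positivity : 0 ≤ 2 * R)
    refine (Metric.isOpen_ball.sdiff Metric.isClosed_closedBall).measure_pos μ ⟨z, ?_, ?_⟩
    · rw [Metric.mem_ball, dist_zero_right, hz]; linarith
    · rw [Metric.mem_closedBall, dist_zero_right, hz]; linarith
  have hAmeas : MeasurableSet A := measurableSet_ball.diff measurableSet_closedBall
  have hAu : ∀ᵐ y ∂μ, y ∈ A → u y = 0 := by
    filter_upwards [hu0] with y hy hyA using hy fun hyΩ => hyA.2 (hΩR hyΩ)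
  set F : E → ℝ≥0∞ := fun x => ∫⁻ y, ENNReal.ofReal (|u x - u y| ^ 2 / ‖x - y‖ ^ s) ∂μ
  have hpt : ∀ x ∈ Metric.closedBall (0 : E) R,
      μ A * ENNReal.ofReal (u x ^ 2) ≤ ENNReal.ofReal ((4 * R) ^ s) * F x := by
    intro x hx
    rw [mem_closedBall_zero_iff] at hx
    rw [mul_comm, ← setLIntegral_const, ← lintegral_const_mul' _ _ ENNReal.ofReal_ne_top]
    refine (setLIntegral_mono_ae' hAmeas ?_).trans (setLIntegral_le_lintegral _ _)
    filter_upwards [hAu] with y hy hyA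
    have hy3 : ‖y‖ < 3 * R := mem_ball_zero_iff.1 hyA.1
    have hyR : R < ‖y‖ := not_le.1 fun h => hyA.2 (mem_closedBall_zero_iff.2 h)
    have hxy : 0 < ‖x - y‖ := by
      have := norm_sub_norm_le y x
      rw [norm_sub_rev] at this
      linarith
    have hxyR : ‖x - y‖ ^ s ≤ (4 * R) ^ s :=
      Real.rpow_le_rpow hxy.le (by linarith [norm_sub_le x y]) hs
    rw [← ENNReal.ofReal_mul (by positivity), hy hyA, sub_zero, sq_abs]
    refine ENNReal.ofReal_le_ofReal ?_
    rw [mul_div_assoc', le_div_iff₀ (by positivity), mul_comm]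
    exact mul_le_mul_of_nonneg_right hxyR (sq_nonneg _)
  have hfin : μ A * ∫⁻ x in Ω, ENNReal.ofReal (u x ^ 2) ∂μ < ⊤ := calc
    _ ≤ ∫⁻ x in Metric.closedBall 0 R, μ A * ENNReal.ofReal (u x ^ 2) ∂μ := by
      rw [lintegral_const_mul' _ _ (measure_ne_top_of_subset sdiff_subset measure_ball_lt_top.ne)]
      gcongr
    _ ≤ ∫⁻ x in Metric.closedBall 0 R, ENNReal.ofReal ((4 * R) ^ s) * F x ∂μ :=
      setLIntegral_mono' measurableSet_closedBall hpt
    _ ≤ ENNReal.ofReal ((4 * R) ^ s) * gagliardoEnergy μ s u := by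
      rw [lintegral_const_mul' _ _ ENNReal.ofReal_ne_top]
      exact mul_le_mul_right (setLIntegral_le_lintegral _ _) _
    _ < ⊤ := ENNReal.mul_lt_top ENNReal.ofReal_lt_top hu
  refine (memLp_two_iff_integrable_sq hum.aestronglyMeasurable).2
    ⟨(hum.pow_const 2).aestronglyMeasurable, ?_⟩
  rw [hasFiniteIntegral_iff_ofReal (ae_of_all _ fun x => sq_nonneg _)]
  exact ENNReal.lt_top_of_mul_ne_top_right hfin.ne hA.ne'

/-- Weak form of `c 𝔄 u + β(u) = f` in `Ω`, with `s = N + 2σ` and `c = C_σ / 2`. -/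
def IsWeakSolution (μ : Measure E) (Ω : Set E) (s c : ℝ) (β : ℝ → ℝ) (u f : E → ℝ) : Prop :=
  ∀ ζ : E → ℝ, Measurable ζ → (∀ᵐ x ∂μ, x ∉ Ω → ζ x = 0) → gagliardoEnergy μ s ζ < ⊤ →
    Integrable (fun q : E × E => (u q.1 - u q.2) * (ζ q.1 - ζ q.2) / ‖q.1 - q.2‖ ^ s)
      (μ.prod μ) →
    Integrable (fun x => β (u x) * ζ x) (μ.restrict Ω) →
    Integrable (fun x => f x * ζ x) (μ.restrict Ω) →
    c * (∫ q : E × E, (u q.1 - u q.2) * (ζ q.1 - ζ q.2) / ‖q.1 - q.2‖ ^ s ∂(μ.prod μ))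
      + ∫ x in Ω, β (u x) * ζ x ∂μ = ∫ x in Ω, f x * ζ x ∂μ

lemma integral_gagliardoPairing_comp_nonneg {μ : Measure E} {s : ℝ} {u : E → ℝ} {δ : ℝ → ℝ}
    (hδ : Monotone δ) :
    0 ≤ ∫ q : E × E, (u q.1 - u q.2) * (δ (u q.1) - δ (u q.2)) / ‖q.1 - q.2‖ ^ s ∂(μ.prod μ) := by
  refine integral_nonneg fun q => div_nonneg ?_ (by positivity)
  rcases le_total (u q.1) (u q.2) with h | h
  · exact mul_nonneg_of_nonpos_of_nonpos (sub_nonpos.2 h) (sub_nonpos.2 (hδ h))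
  · exact mul_nonneg (sub_nonneg.2 h) (sub_nonneg.2 (hδ h))

variable [BorelSpace E] [SecondCountableTopology E] {μ : Measure E} [SFinite μ] {s : ℝ}
  {u : E → ℝ}

lemma integrable_abs_sub_sq_div_of_gagliardoEnergy_lt_top (hum : Measurable u)
    (hu : gagliardoEnergy μ s u < ⊤) :
    Integrable (fun q : E × E => |u q.1 - u q.2| ^ 2 / ‖q.1 - q.2‖ ^ s) (μ.prod μ) := by
  have hmeas : Measurable fun q : E × E => |u q.1 - u q.2| ^ 2 / ‖q.1 - q.2‖ ^ s := by
    fun_prop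
  refine ⟨hmeas.aestronglyMeasurable, ?_⟩
  rw [hasFiniteIntegral_iff_ofReal (ae_of_all _ fun q => by positivity),
    lintegral_prod _ hmeas.ennreal_ofReal.aemeasurable]
  exact hu

lemma integrable_gagliardoPairing_comp (hum : Measurable u) (hu : gagliardoEnergy μ s u < ⊤)
    {δ : ℝ → ℝ} {K : NNReal} (hδ : LipschitzWith K δ) :
    Integrable (fun q : E × E =>
      (u q.1 - u q.2) * (δ (u q.1) - δ (u q.2)) / ‖q.1 - q.2‖ ^ s) (μ.prod μ) := by
  refine ((integrable_abs_sub_sq_div_of_gagliardoEnergy_lt_top hum hu).const_mul K).mono' ?_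
    (ae_of_all _ fun q => ?_)
  · have := hδ.continuous.measurable
    exact (by fun_prop : Measurable _).aestronglyMeasurable
  have h := hδ.dist_le_mul (u q.1) (u q.2)
  rw [Real.dist_eq, Real.dist_eq] at h
  rw [Real.norm_eq_abs, abs_div, abs_mul, abs_of_nonneg (Real.rpow_nonneg (norm_nonneg _) s),
    mul_div_assoc']
  refine div_le_div_of_nonneg_right ?_ (by positivity)
  calc |u q.1 - u q.2| * |δ (u q.1) - δ (u q.2)| ≤ |u q.1 - u q.2| * (K * |u q.1 - u q.2|) :=
        mul_le_mul_of_nonneg_left h (abs_nonneg _)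
    _ = K * |u q.1 - u q.2| ^ 2 := by ring

/-- Testing with `δ ∘ u`, the nonlocal term is nonnegative since `δ` is monotone. -/
lemma IsWeakSolution.integral_mul_comp_le {Ω : Set E} {c : ℝ} {β : ℝ → ℝ} {f : E → ℝ}
    (hsol : IsWeakSolution μ Ω s c β u f) (hc : 0 ≤ c) (hum : Measurable u)
    (hu0 : ∀ᵐ x ∂μ, x ∉ Ω → u x = 0) (hu : gagliardoEnergy μ s u < ⊤)
    (huL2 : MemLp u 2 (μ.restrict Ω)) (hβu : MemLp (fun x => β (u x)) 2 (μ.restrict Ω))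
    (hf : MemLp f 2 (μ.restrict Ω)) {δ : ℝ → ℝ} {K : NNReal} (hδ : LipschitzWith K δ)
    (hδm : Monotone δ) (hδ0 : δ 0 = 0) :
    ∫ x in Ω, β (u x) * δ (u x) ∂μ ≤ ∫ x in Ω, f x * δ (u x) ∂μ := by
  have hδu : MemLp (δ ∘ u) 2 (μ.restrict Ω) := hδ.comp_memLp hδ0 huL2
  have heq := hsol (δ ∘ u) (hδ.continuous.measurable.comp hum)
    (by filter_upwards [hu0] with x hx hxΩ using by simp [hx hxΩ, hδ0])
    ((gagliardoEnergy_comp_le hδ).trans_lt (ENNReal.mul_lt_top ENNReal.ofReal_lt_top hu))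
    (integrable_gagliardoPairing_comp hum hu hδ) (hβu.integrable_mul hδu) (hf.integrable_mul hδu)
  have hpos := mul_nonneg hc
    (integral_gagliardoPairing_comp_nonneg (μ := μ) (s := s) (u := u) hδm)
  simp only [Function.comp] at heq
  linarith

end Gagliardo

lemma eLpNorm_le_of_integral_rpow_le_integral_mul {α : Type*} [MeasurableSpace α]
    {μ : Measure α} {p : ℝ} (hp : 1 < p) {v f : α → ℝ} (hv : MemLp v (ENNReal.ofReal p) μ)
    (hf : MemLp f (ENNReal.ofReal p) μ)
    (h : ∫ x, |v x| ^ p ∂μ ≤ ∫ x, |f x| * |v x| ^ (p - 1) ∂μ) :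
    eLpNorm v (ENNReal.ofReal p) μ ≤ eLpNorm f (ENNReal.ofReal p) μ := by
  have hp0 : 0 < p := by linarith
  set q := p / (p - 1)
  have hpq : p.HolderConjugate q := Real.HolderConjugate.conjExponent hp
  have hvq : MemLp (fun x => |v x| ^ (p - 1)) (ENNReal.ofReal q) μ := by
    have := hv.norm_rpow_div (ENNReal.ofReal (p - 1))
    rwa [ENNReal.toReal_ofReal (by linarith), ← ENNReal.ofReal_div_of_pos (by linarith)] at this
  have hvq_pow : ∀ x, (|v x| ^ (p - 1)) ^ q = |v x| ^ p := fun x => by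
    rw [← Real.rpow_mul (abs_nonneg _), mul_div_cancel₀ _ (by linarith : p - 1 ≠ 0)]
  have holder := integral_mul_le_Lp_mul_Lq_of_nonneg hpq (ae_of_all _ fun x => abs_nonneg (f x))
    (ae_of_all _ fun x => by positivity) hf.abs hvq
  simp_rw [hvq_pow] at holder
  set A := ∫ x, |v x| ^ p ∂μ
  set B := ∫ x, |f x| ^ p ∂μ
  have hAB : A ^ p⁻¹ ≤ B ^ p⁻¹ := by
    have hA0 : 0 ≤ A := integral_nonneg fun x => by positivity
    rcases hA0.eq_or_lt with hA | hA
    · rw [← hA, Real.zero_rpow (inv_ne_zero hp0.ne')]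
      positivity
    · have hsplit : A ^ p⁻¹ * A ^ q⁻¹ = A := by
        rw [← Real.rpow_add hA, hpq.inv_add_inv_eq_one, Real.rpow_one]
      refine le_of_mul_le_mul_right ?_ (Real.rpow_pos_of_pos hA q⁻¹)
      simpa only [hsplit, one_div] using h.trans holder
  rw [hv.eLpNorm_eq_integral_rpow_norm (by positivity) ENNReal.ofReal_ne_top,
    hf.eLpNorm_eq_integral_rpow_norm (by positivity) ENNReal.ofReal_ne_top]
  simpa only [Real.norm_eq_abs, ENNReal.toReal_ofReal hp0.le] using ENNReal.ofReal_le_ofReal hAB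

section Estimate

variable {E : Type*} [NormedAddCommGroup E] [MeasurableSpace E] [BorelSpace E]
  [SecondCountableTopology E] {μ : Measure E} [SFinite μ] {Ω : Set E} {s c p ε : ℝ}
  {β : ℝ → ℝ} {u f : E → ℝ}

lemma IsWeakSolution.eLpNorm_comp_yosidaResolvent_le [IsFiniteMeasure (μ.restrict Ω)]
    (hsol : IsWeakSolution μ Ω s c β u f) (hc : 0 ≤ c) (hp : 2 ≤ p) (hβc : Continuous β)
    (hβm : Monotone β) (hβ0 : β 0 = 0) (hum : Measurable u) (hu0 : ∀ᵐ x ∂μ, x ∉ Ω → u x = 0)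
    (hu : gagliardoEnergy μ s u < ⊤) (huL2 : MemLp u 2 (μ.restrict Ω))
    (hβu : MemLp (fun x => β (u x)) 2 (μ.restrict Ω))
    (hf : MemLp f (ENNReal.ofReal p) (μ.restrict Ω)) (hε : 0 < ε) :
    eLpNorm (fun x => β (yosidaResolvent (signedPow p ∘ β) ε (u x))) (ENNReal.ofReal p)
      (μ.restrict Ω) ≤ eLpNorm f (ENNReal.ofReal p) (μ.restrict Ω) := by
  set g := signedPow p ∘ β
  have hgc : Continuous g := (continuous_signedPow hp).comp hβc
  have hgm : Monotone g := (monotone_signedPow hp).comp hβm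
  have hg0 : g 0 = 0 := by simp [g, hβ0]
  set J := yosidaResolvent g ε
  set δ := yosidaApprox g ε
  have hδ := lipschitzWith_yosidaApprox hgc hgm hg0 hε
  have hδ0 := yosidaApprox_zero hgc hgm hg0 hε.le
  have hδu : MemLp (δ ∘ u) 2 (μ.restrict Ω) := hδ.comp_memLp hδ0 huL2
  have hf2 : MemLp f 2 (μ.restrict Ω) :=
    hf.mono_exponent (by simpa using ENNReal.ofReal_le_ofReal hp)
  have hβJ : ∀ t, β (J t) ∈ uIcc 0 (β t) := fun t =>
    hβ0 ▸ hβm.mapsTo_uIcc (yosidaResolvent_spec hgc hgm hg0 hε.le t).1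
  have hint : Integrable (fun x => β (u x) * δ (u x)) (μ.restrict Ω) := hβu.integrable_mul hδu
  have hv : MemLp (fun x => β (J (u x))) (ENNReal.ofReal p) (μ.restrict Ω) := by
    have hvm : Measurable fun x => β (J (u x)) :=
      hβc.measurable.comp ((monotone_yosidaResolvent hgc hgm hg0 hε.le).measurable.comp hum)
    rw [← integrable_norm_rpow_iff hvm.aestronglyMeasurable (by simp; linarith)
      ENNReal.ofReal_ne_top]
    refine hint.mono' (hvm.norm.pow_const _).aestronglyMeasurable (ae_of_all _ fun x => ?_)
    rw [Real.norm_eq_abs, Real.norm_eq_abs, ENNReal.toReal_ofReal (by linarith),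
      abs_of_nonneg (by positivity)]
    exact abs_rpow_le_mul_signedPow hp (hβJ (u x))
  refine eLpNorm_le_of_integral_rpow_le_integral_mul (by linarith) hv hf ?_
  calc ∫ x in Ω, |β (J (u x))| ^ p ∂μ ≤ ∫ x in Ω, β (u x) * δ (u x) ∂μ :=
        integral_mono_of_nonneg (ae_of_all _ fun x => by positivity) hint
          (ae_of_all _ fun x => abs_rpow_le_mul_signedPow hp (hβJ (u x)))
    _ ≤ ∫ x in Ω, f x * δ (u x) ∂μ :=
        hsol.integral_mul_comp_le hc hum hu0 hu huL2 hβu hf2 hδ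
          (monotone_yosidaApprox hgc hgm hg0 hε.le) hδ0
    _ ≤ ∫ x in Ω, |f x * δ (u x)| ∂μ :=
        integral_mono (hf2.integrable_mul hδu) (hf2.integrable_mul hδu).abs
          fun x => le_abs_self _
    _ = ∫ x in Ω, |f x| * |β (J (u x))| ^ (p - 1) ∂μ := by
        refine integral_congr_ae (ae_of_all _ fun x => ?_)
        exact (abs_mul _ _).trans (congrArg (|f x| * ·) (abs_signedPow hp _))

lemma IsWeakSolution.eLpNorm_comp_le [IsFiniteMeasure (μ.restrict Ω)]
    (hsol : IsWeakSolution μ Ω s c β u f) (hc : 0 ≤ c) (hp : 2 ≤ p) (hβc : Continuous β)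
    (hβm : Monotone β) (hβ0 : β 0 = 0) (hum : Measurable u) (hu0 : ∀ᵐ x ∂μ, x ∉ Ω → u x = 0)
    (hu : gagliardoEnergy μ s u < ⊤) (huL2 : MemLp u 2 (μ.restrict Ω))
    (hβu : MemLp (fun x => β (u x)) 2 (μ.restrict Ω))
    (hf : MemLp f (ENNReal.ofReal p) (μ.restrict Ω)) :
    eLpNorm (fun x => β (u x)) (ENNReal.ofReal p) (μ.restrict Ω)
      ≤ eLpNorm f (ENNReal.ofReal p) (μ.restrict Ω) := by
  set g := signedPow p ∘ β
  have hgc : Continuous g := (continuous_signedPow hp).comp hβc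
  have hgm : Monotone g := (monotone_signedPow hp).comp hβm
  have hg0 : g 0 = 0 := by simp [g, hβ0]
  set ε : ℕ → ℝ := fun n => 1 / ((n : ℝ) + 1)
  have hε : ∀ n, 0 < ε n := fun n => by positivity
  have hε0 : Tendsto ε atTop (𝓝[≥] 0) := tendsto_nhdsWithin_iff.2
    ⟨tendsto_one_div_add_atTop_nhds_zero_nat, Eventually.of_forall fun n => (hε n).le⟩
  calc eLpNorm (fun x => β (u x)) (ENNReal.ofReal p) (μ.restrict Ω)
      ≤ atTop.liminf fun n => eLpNorm (fun x => β (yosidaResolvent g (ε n) (u x)))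
          (ENNReal.ofReal p) (μ.restrict Ω) :=
        Lp.eLpNorm_lim_le_liminf_eLpNorm (fun n => (hβc.measurable.comp
            ((monotone_yosidaResolvent hgc hgm hg0 (hε n).le).measurable.comp
              hum)).aestronglyMeasurable) _
          (ae_of_all _ fun x => (hβc.tendsto _).comp
            ((tendsto_yosidaResolvent hgc hgm hg0 (u x)).comp hε0))
    _ ≤ eLpNorm f (ENNReal.ofReal p) (μ.restrict Ω) :=
        liminf_le_of_frequently_le' (Frequently.of_forall fun n =>
          hsol.eLpNorm_comp_yosidaResolvent_le hc hp hβc hβm hβ0 hum hu0 hu huL2 hβu hf (hε n))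

end Estimate

theorem beta_Lp_estimate_general (N : ℕ) (hN : 0 < N) (Ω : Set (Fin N → ℝ))
    (hΩbdd : Bornology.IsBounded Ω)
    (σ Cσ p : ℝ) (hσ0 : 0 < σ) (hCσ : 0 < Cσ) (hp : 2 ≤ p)
    (β : ℝ → ℝ) (hβcont : Continuous β) (hβmono : Monotone β) (hβ0 : β 0 = 0)
    (u f : (Fin N → ℝ) → ℝ) (hum : Measurable u) (hfm : Measurable f)
    (hu0 : ∀ᵐ x ∂volume, x ∉ Ω → u x = 0)
    (huX : (∫⁻ x, ∫⁻ y,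
        ENNReal.ofReal (|u x - u y| ^ 2 / ‖x - y‖ ^ ((N : ℝ) + 2 * σ)) ∂volume ∂volume) < ⊤)
    (hfLp : eLpNorm f (ENNReal.ofReal p) (volume.restrict Ω) < ⊤)
    (hβuL2 : eLpNorm (fun x => β (u x)) 2 (volume.restrict Ω) < ⊤)
    (heq : ∀ ζ : (Fin N → ℝ) → ℝ, Measurable ζ →
      (∀ᵐ x ∂volume, x ∉ Ω → ζ x = 0) →
      (∫⁻ x, ∫⁻ y,
        ENNReal.ofReal (|ζ x - ζ y| ^ 2 / ‖x - y‖ ^ ((N : ℝ) + 2 * σ)) ∂volume ∂volume) < ⊤ →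
      Integrable (fun q : (Fin N → ℝ) × (Fin N → ℝ) =>
        (u q.1 - u q.2) * (ζ q.1 - ζ q.2) / ‖q.1 - q.2‖ ^ ((N : ℝ) + 2 * σ))
        (volume.prod volume) →
      Integrable (fun x => β (u x) * ζ x) (volume.restrict Ω) →
      Integrable (fun x => f x * ζ x) (volume.restrict Ω) →
      (Cσ / 2) * (∫ q : (Fin N → ℝ) × (Fin N → ℝ),
          (u q.1 - u q.2) * (ζ q.1 - ζ q.2) / ‖q.1 - q.2‖ ^ ((N : ℝ) + 2 * σ)
          ∂(volume.prod volume))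
        + ∫ x in Ω, β (u x) * ζ x ∂volume
        = ∫ x in Ω, f x * ζ x ∂volume) :
    eLpNorm (fun x => β (u x)) (ENNReal.ofReal p) (volume.restrict Ω)
      ≤ eLpNorm f (ENNReal.ofReal p) (volume.restrict Ω) := by
  have : Nonempty (Fin N) := ⟨⟨0, hN⟩⟩
  have : IsFiniteMeasure (volume.restrict Ω) :=
    isFiniteMeasure_restrict.2 hΩbdd.measure_lt_top.ne
  have hsol : IsWeakSolution volume Ω ((N : ℝ) + 2 * σ) (Cσ / 2) β u f := heq
  exact hsol.eLpNorm_comp_le (by positivity) hp hβcont hβmono hβ0 hum hu0 huX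
    (memLp_two_restrict_of_gagliardoEnergy_lt_top hΩbdd (by positivity) hum hu0 huX)
    ⟨(hβcont.measurable.comp hum).aestronglyMeasurable, hβuL2⟩ ⟨hfm.aestronglyMeasurable, hfLp⟩

/-- If `β : ℝ → ℝ` is continuous, monotone nondecreasing with `β(0) = 0` and
`u ∈ X_{σ0}` solves `𝔄_σ u + β(u) = f` weakly with `f ∈ L^p(Ω)` (`p ≥ 2`) and
`β(u) ∈ L²(Ω)`, then `β(u) ∈ L^p(Ω)` with `‖β(u)‖_{L^p(Ω)} ≤ ‖f‖_{L^p(Ω)}`. -/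
theorem beta_Lp_estimate (N : ℕ) (hN : 0 < N) (Ω : Set (Fin N → ℝ))
    (hΩmeas : MeasurableSet Ω) (hΩbdd : Bornology.IsBounded Ω)
    (σ Cσ p : ℝ) (hσ0 : 0 < σ) (hσ1 : σ < 1) (hCσ : 0 < Cσ) (hp : 2 ≤ p)
    (β : ℝ → ℝ) (hβcont : Continuous β) (hβmono : Monotone β) (hβ0 : β 0 = 0)
    (u f : (Fin N → ℝ) → ℝ) (hum : Measurable u) (hfm : Measurable f)
    (hu0 : ∀ᵐ x ∂volume, x ∉ Ω → u x = 0)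
    (huX : (∫⁻ x, ∫⁻ y,
        ENNReal.ofReal (|u x - u y| ^ 2 / ‖x - y‖ ^ ((N : ℝ) + 2 * σ)) ∂volume ∂volume) < ⊤)
    (hfLp : eLpNorm f (ENNReal.ofReal p) (volume.restrict Ω) < ⊤)
    (hβuL2 : eLpNorm (fun x => β (u x)) 2 (volume.restrict Ω) < ⊤)
    (heq : ∀ ζ : (Fin N → ℝ) → ℝ, Measurable ζ →
      (∀ᵐ x ∂volume, x ∉ Ω → ζ x = 0) →
      (∫⁻ x, ∫⁻ y,
        ENNReal.ofReal (|ζ x - ζ y| ^ 2 / ‖x - y‖ ^ ((N : ℝ) + 2 * σ)) ∂volume ∂volume) < ⊤ →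
      Integrable (fun q : (Fin N → ℝ) × (Fin N → ℝ) =>
        (u q.1 - u q.2) * (ζ q.1 - ζ q.2) / ‖q.1 - q.2‖ ^ ((N : ℝ) + 2 * σ))
        (volume.prod volume) →
      Integrable (fun x => β (u x) * ζ x) (volume.restrict Ω) →
      Integrable (fun x => f x * ζ x) (volume.restrict Ω) →
      (Cσ / 2) * (∫ q : (Fin N → ℝ) × (Fin N → ℝ),
          (u q.1 - u q.2) * (ζ q.1 - ζ q.2) / ‖q.1 - q.2‖ ^ ((N : ℝ) + 2 * σ)
          ∂(volume.prod volume))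
        + ∫ x in Ω, β (u x) * ζ x ∂volume
        = ∫ x in Ω, f x * ζ x ∂volume) :
    eLpNorm (fun x => β (u x)) (ENNReal.ofReal p) (volume.restrict Ω)
      ≤ eLpNorm f (ENNReal.ofReal p) (volume.restrict Ω) :=
  beta_Lp_estimate_general N hN Ω hΩbdd σ Cσ p hσ0 hCσ hp β hβcont hβmono hβ0 u f hum hfm hu0 huX
    hfLp hβuL2 heq
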